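/- For every treatment sequence s = (t_1, …, t_p) and every k ∈ {1, …, p}, with f_{k,i} = #{j ≤ k : t_j = i}, ξ_k = ∑_{i=1}^t f_{k,i}², and ρ_k = #{j ≤ k−1 : t_j = t_{j+1}}, the following trace identities hold: tr(B_t T_s' B^k_p T_s B_t) = k − ξ_k/k; tr(B_t T_s' B^k_p F_s B_t) = (k ρ_k + f_{k,t_k} − ξ_k)/k; and tr(B_t F_s' B^k_p F_s B_t) = (kt−1)(k−1)/(kt) − (ξ_k − 2 f_{k,t_k} + 1)/k. -/

import Mathlib

open Matrix Finset

noncomputable section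

/-- `B^m_{i,j}`: the `i × j` real matrix whose upper-left `m × m` block is
`B_m = I_m − J_m/m` and whose remaining entries are `0`. -/
def Bblock (m i j : ℕ) : Matrix (Fin i) (Fin j) ℝ :=
  Matrix.of fun a b =>
    if (a : ℕ) < m ∧ (b : ℕ) < m then
      (if (a : ℕ) = (b : ℕ) then 1 else 0) - 1 / (m : ℝ)
    else 0

/-- `B_k = I_k − J_k/k`. -/
def Bsq (k : ℕ) : Matrix (Fin k) (Fin k) ℝ := Bblock k k k

/-- Treatment/period incidence matrix `T_s`. -/
def Tmat {p t : ℕ} (s : Fin p → Fin t) : Matrix (Fin p) (Fin t) ℝ :=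
  Matrix.of fun k i => if s k = i then 1 else 0

/-- Carryover incidence matrix `F_s`. -/
def Fmat {p t : ℕ} (s : Fin p → Fin t) : Matrix (Fin p) (Fin t) ℝ :=
  Matrix.of fun k i =>
    if (k : ℕ) = 0 then 0
    else if s ⟨(k : ℕ) - 1, lt_of_le_of_lt (Nat.sub_le _ _) k.isLt⟩ = i then 1 else 0

attribute [local instance] Classical.propDecidable

/-- `f_{k,i} = #{j ≤ k : t_j = i}`, the number of the first `k` periods receiving
treatment `i`. -/
def fcount {p t : ℕ} (s : Fin p → Fin t) (k : ℕ) (i : Fin t) : ℕ :=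
  (Finset.univ.filter fun j : Fin p => (j : ℕ) < k ∧ s j = i).card

/-- `ξ_k = ∑_i f_{k,i}²`. -/
def xiSum {p t : ℕ} (s : Fin p → Fin t) (k : ℕ) : ℕ :=
  ∑ i, (fcount s k i) ^ 2

/-- `ρ_k = #{j ≤ k−1 : t_j = t_{j+1}}`. -/
def rhoCount {p t : ℕ} (s : Fin p → Fin t) (k : ℕ) : ℕ :=
  (Finset.univ.filter fun j : Fin p =>
    (j : ℕ) + 1 < k ∧ ∃ h : (j : ℕ) + 1 < p, s j = s ⟨(j : ℕ) + 1, h⟩).card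

/-!
Since `B_t` is idempotent, `tr(B_t X' A Y B_t) = tr(X' A Y) - 1' X' A Y 1 / t`, and `B^k_p`
centres over the first `k` periods, so both terms are centred sums over those periods: of the
inner products of the rows of `X` and `Y`, and of the products of their row sums. The rows of
`T_s` are the unit vectors `e_{t_j}`; those of `F_s` are the rows of `T_s` moved down one period,
above a zero first row. Over the first `k` periods the column sums of `T_s` are therefore
`f_k = f_{k-1} + e_{t_k}` and those of `F_s` are `f_{k-1}`, the row inner products of `T_s` and
`F_s` count the repeats `ρ_k`, and the three traces reduce to `ξ_k = f_k · f_k`,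
`f_{k,t_k} = f_k · e_{t_k}` and `e_{t_k} · e_{t_k} = 1`.
-/

section Centering

variable {t : ℕ}

lemma Bsq_apply (i j : Fin t) : Bsq t i j = (if i = j then 1 else 0) - 1 / (t : ℝ) := by
  simp [Bsq, Bblock, Fin.val_inj]

lemma trace_mul_Bsq (M : Matrix (Fin t) (Fin t) ℝ) :
    (M * Bsq t).trace = M.trace - 1 ⬝ᵥ (M *ᵥ 1) / t := by
  simp only [trace, Matrix.diag, mul_apply, Bsq_apply, mul_sub, mul_ite, mul_one, mul_zero,
    sum_sub_distrib, sum_ite_eq', mem_univ, if_true, mulVec, dotProduct, one_mul,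
    Pi.one_apply, sum_div, mul_one_div]

lemma Bsq_mul_Bsq : Bsq t * Bsq t = Bsq t := by
  ext i j
  have : (t : ℝ) ≠ 0 := Nat.cast_ne_zero.mpr i.pos.ne'
  simp only [mul_apply, Bsq_apply, sub_mul, mul_sub, ite_mul, one_mul, zero_mul, mul_ite,
    mul_one, mul_zero, sum_sub_distrib, sum_ite_eq, sum_ite_eq', mem_univ, if_true, sum_const,
    card_univ, Fintype.card_fin, nsmul_eq_mul]
  field_simp
  ring

lemma trace_Bsq_mul_mul_Bsq (M : Matrix (Fin t) (Fin t) ℝ) :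
    (Bsq t * M * Bsq t).trace = M.trace - 1 ⬝ᵥ (M *ᵥ 1) / t := by
  rw [Matrix.mul_assoc, trace_mul_comm, Matrix.mul_assoc, Bsq_mul_Bsq, trace_mul_Bsq]

lemma trace_Bsq_mul_transpose_mul_mul_mul_Bsq {n : Type*} [Fintype n]
    (X Y : Matrix n (Fin t) ℝ) (A : Matrix n n ℝ) :
    (Bsq t * Xᵀ * A * Y * Bsq t).trace =
      (Xᵀ * A * Y).trace - (X *ᵥ 1) ⬝ᵥ (A *ᵥ (Y *ᵥ 1)) / t := by
  rw [show Bsq t * Xᵀ * A * Y = Bsq t * (Xᵀ * A * Y) by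
      simp only [Matrix.mul_assoc], trace_Bsq_mul_mul_Bsq, ← mulVec_mulVec, ← mulVec_mulVec,
    dotProduct_mulVec, vecMul_transpose]

end Centering

section Block

variable {k p : ℕ}

lemma sum_filter_val_lt {M : Type*} [AddCommMonoid M] (hkp : k ≤ p) (g : Fin p → M) :
    ∑ a ∈ univ.filter (fun a : Fin p => (a : ℕ) < k), g a =
      ∑ a : Fin k, g (a.castLE hkp) := by
  have h : univ.filter (fun a : Fin p => (a : ℕ) < k) = univ.map (Fin.castLEEmb hkp) := by
    ext a
    simp only [mem_filter, mem_univ, true_and, mem_map, Fin.castLEEmb_apply]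
    exact ⟨fun h => ⟨⟨a, h⟩, rfl⟩, by rintro ⟨b, rfl⟩; exact b.isLt⟩
  rw [h, sum_map]
  rfl

lemma sum_Bblock_mul (hkp : k ≤ p) (g : Fin p → Fin p → ℝ) :
    ∑ a, ∑ b, Bblock k p p a b * g a b =
      ∑ a : Fin k, g (a.castLE hkp) (a.castLE hkp) -
        (∑ a : Fin k, ∑ b : Fin k, g (a.castLE hkp) (b.castLE hkp)) / k := by
  calc ∑ a, ∑ b, Bblock k p p a b * g a b
      = ∑ a ∈ univ.filter (fun a : Fin p => (a : ℕ) < k),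
          ∑ b ∈ univ.filter (fun b : Fin p => (b : ℕ) < k),
            ((if (a : ℕ) = b then 1 else 0) - 1 / (k : ℝ)) * g a b := by
        rw [sum_filter]
        refine sum_congr rfl fun a _ => ?_
        rw [sum_filter]
        split_ifs with ha
        · exact sum_congr rfl fun b _ => by by_cases hb : (b : ℕ) < k <;> simp [Bblock, ha, hb]
        · simp [Bblock, ha]
    _ = ∑ a : Fin k, ∑ b : Fin k,
          ((if a = b then 1 else 0) - 1 / (k : ℝ)) * g (a.castLE hkp) (b.castLE hkp) := by
        simp only [sum_filter_val_lt hkp, Fin.val_inj, Fin.castLE_inj]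
    _ = _ := by
        simp only [sub_mul, ite_mul, one_mul, zero_mul, sum_sub_distrib, sum_ite_eq, mem_univ,
          if_true, sum_div, one_div_mul_eq_div]

lemma trace_transpose_mul_Bblock_mul {n : Type*} [Fintype n] (hkp : k ≤ p)
    (X Y : Matrix (Fin p) n ℝ) :
    (Xᵀ * Bblock k p p * Y).trace =
      ∑ a : Fin k, X (a.castLE hkp) ⬝ᵥ Y (a.castLE hkp) -
        (∑ a : Fin k, X (a.castLE hkp)) ⬝ᵥ (∑ a : Fin k, Y (a.castLE hkp)) / k := by
  have h : (Xᵀ * Bblock k p p * Y).trace = ∑ a, ∑ b, Bblock k p p a b * (X a ⬝ᵥ Y b) := by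
    rw [trace_mul_cycle, trace_mul_comm]
    simp only [trace, Matrix.diag, mul_apply, transpose_apply, dotProduct_comm (X _)]
    rfl
  rw [h, sum_Bblock_mul hkp, sum_dotProduct]
  simp only [dotProduct_sum]

lemma dotProduct_Bblock_mulVec (hkp : k ≤ p) (u v : Fin p → ℝ) :
    u ⬝ᵥ (Bblock k p p *ᵥ v) =
      ∑ a : Fin k, u (a.castLE hkp) * v (a.castLE hkp) -
        (∑ a : Fin k, u (a.castLE hkp)) * (∑ a : Fin k, v (a.castLE hkp)) / k := by
  have h : u ⬝ᵥ (Bblock k p p *ᵥ v) = ∑ a, ∑ b, Bblock k p p a b * (u a * v b) := by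
    simp only [dotProduct, mulVec, mul_sum]
    exact sum_congr rfl fun a _ => sum_congr rfl fun b _ => by ring
  rw [h, sum_Bblock_mul hkp, sum_mul_sum]

end Block

section Design

variable {p t : ℕ} (s : Fin p → Fin t)

lemma dotProduct_Tmat (v : Fin t → ℝ) (a : Fin p) : v ⬝ᵥ Tmat s a = v (s a) := by
  simp [dotProduct, Tmat]

lemma Tmat_dotProduct_self (a : Fin p) : Tmat s a ⬝ᵥ Tmat s a = 1 := by
  rw [dotProduct_Tmat]
  simp [Tmat]

lemma Tmat_mulVec_one : Tmat s *ᵥ 1 = 1 := by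
  ext a
  rw [mulVec, dotProduct_comm]
  exact dotProduct_Tmat s 1 a

variable {m : ℕ} (hmp : m + 1 ≤ p)

lemma Fmat_castLE_zero : Fmat s ((0 : Fin (m + 1)).castLE hmp) = 0 := by
  ext i
  rfl

lemma Fmat_castLE_succ (b : Fin m) :
    Fmat s (b.succ.castLE hmp) = Tmat s (b.castSucc.castLE hmp) := by
  ext i
  rfl

lemma Fmat_mulVec_one_castLE_zero : (Fmat s *ᵥ 1) ((0 : Fin (m + 1)).castLE hmp) = 0 := by
  rw [mulVec, Fmat_castLE_zero]
  exact zero_dotProduct 1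

lemma Fmat_mulVec_one_castLE_succ (b : Fin m) : (Fmat s *ᵥ 1) (b.succ.castLE hmp) = 1 := by
  rw [mulVec, Fmat_castLE_succ, ← mulVec, Tmat_mulVec_one, Pi.one_apply]

lemma fcount_eq_sum {k : ℕ} (hkp : k ≤ p) (i : Fin t) :
    (fcount s k i : ℝ) = (∑ a : Fin k, Tmat s (a.castLE hkp)) i := by
  rw [fcount, natCast_card_filter, Finset.sum_apply,
    ← sum_filter_val_lt hkp (fun a => Tmat s a i), sum_filter]
  simp only [Tmat, of_apply, ite_and]

lemma fcount_eq_dotProduct {k : ℕ} (hkp : k ≤ p) (a : Fin p) :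
    (fcount s k (s a) : ℝ) = (∑ b : Fin k, Tmat s (b.castLE hkp)) ⬝ᵥ Tmat s a := by
  rw [dotProduct_Tmat, fcount_eq_sum s hkp]

lemma xiSum_eq_sum {k : ℕ} (hkp : k ≤ p) :
    (xiSum s k : ℝ) =
      (∑ a : Fin k, Tmat s (a.castLE hkp)) ⬝ᵥ (∑ a : Fin k, Tmat s (a.castLE hkp)) := by
  rw [xiSum]
  push_cast
  simp only [fcount_eq_sum s hkp, sq]
  rfl

lemma rhoCount_succ_eq_sum :
    (rhoCount s (m + 1) : ℝ) =
      ∑ b : Fin m, Tmat s (b.succ.castLE hmp) ⬝ᵥ Tmat s (b.castSucc.castLE hmp) := by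
  rw [rhoCount, natCast_card_filter]
  calc _ = ∑ j ∈ univ.filter (fun j : Fin p => (j : ℕ) < m),
          if ∃ h : (j : ℕ) + 1 < p, s j = s ⟨j + 1, h⟩ then (1 : ℝ) else 0 := by
        simp only [sum_filter, Nat.add_lt_add_iff_right, ite_and]
    _ = _ := by
        rw [sum_filter_val_lt (Nat.le_of_succ_le hmp)]
        refine sum_congr rfl fun b _ => ?_
        rw [dotProduct_comm, dotProduct_Tmat]
        exact if_congr ⟨fun ⟨_, h⟩ => h, fun h => ⟨(b.succ.castLE hmp).isLt, h⟩⟩ rfl rfl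

end Design

section Traces

variable {p t : ℕ} (s : Fin p → Fin t)

lemma trace_Tmat_Tmat {k : ℕ} (hk : k ≠ 0) (hkp : k ≤ p) :
    (Bsq t * (Tmat s)ᵀ * Bblock k p p * Tmat s * Bsq t).trace = k - (xiSum s k : ℝ) / k := by
  rw [trace_Bsq_mul_transpose_mul_mul_mul_Bsq, trace_transpose_mul_Bblock_mul hkp,
    dotProduct_Bblock_mulVec hkp, Tmat_mulVec_one, ← xiSum_eq_sum s hkp]
  have hk' : (k : ℝ) ≠ 0 := Nat.cast_ne_zero.mpr hk
  simp [Tmat_dotProduct_self, hk']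

variable {m : ℕ} (hmp : m + 1 ≤ p)

lemma trace_Tmat_Fmat :
    (Bsq t * (Tmat s)ᵀ * Bblock (m + 1) p p * Fmat s * Bsq t).trace =
      (((m + 1 : ℕ) : ℝ) * (rhoCount s (m + 1) : ℝ) +
        (fcount s (m + 1) (s ((Fin.last m).castLE hmp)) : ℝ) - (xiSum s (m + 1) : ℝ)) /
          ((m + 1 : ℕ) : ℝ) := by
  rw [trace_Bsq_mul_transpose_mul_mul_mul_Bsq, trace_transpose_mul_Bblock_mul hmp,
    dotProduct_Bblock_mulVec hmp, Tmat_mulVec_one, xiSum_eq_sum s hmp,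
    fcount_eq_dotProduct s hmp, rhoCount_succ_eq_sum s hmp,
    Fin.sum_univ_castSucc (f := fun a => Tmat s (a.castLE hmp))]
  simp only [Fin.sum_univ_succ, Fmat_castLE_zero, Fmat_castLE_succ,
    Fmat_mulVec_one_castLE_zero, Fmat_mulVec_one_castLE_succ, Pi.one_apply, dotProduct_zero,
    zero_add]
  set c := ∑ b : Fin m, Tmat s (b.castSucc.castLE hmp)
  set e := Tmat s ((Fin.last m).castLE hmp)
  simp only [add_dotProduct, dotProduct_add, dotProduct_comm e c, mul_one, mul_zero, zero_add,
    sum_const, card_univ, Fintype.card_fin, nsmul_eq_mul]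
  push_cast
  field_simp
  ring

lemma trace_Fmat_Fmat :
    (Bsq t * (Fmat s)ᵀ * Bblock (m + 1) p p * Fmat s * Bsq t).trace =
      (((m + 1 : ℕ) : ℝ) * t - 1) * (((m + 1 : ℕ) : ℝ) - 1) / (((m + 1 : ℕ) : ℝ) * t) -
        ((xiSum s (m + 1) : ℝ) - 2 * (fcount s (m + 1) (s ((Fin.last m).castLE hmp)) : ℝ) + 1) /
          ((m + 1 : ℕ) : ℝ) := by
  have ht : (t : ℝ) ≠ 0 := Nat.cast_ne_zero.mpr (s ((Fin.last m).castLE hmp)).pos.ne'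
  rw [trace_Bsq_mul_transpose_mul_mul_mul_Bsq, trace_transpose_mul_Bblock_mul hmp,
    dotProduct_Bblock_mulVec hmp, xiSum_eq_sum s hmp, fcount_eq_dotProduct s hmp,
    Fin.sum_univ_castSucc (f := fun a => Tmat s (a.castLE hmp))]
  simp only [Fin.sum_univ_succ, Fmat_castLE_zero, Fmat_castLE_succ, Tmat_dotProduct_self,
    Fmat_mulVec_one_castLE_zero, Fmat_mulVec_one_castLE_succ, dotProduct_zero, zero_add]
  set c := ∑ b : Fin m, Tmat s (b.castSucc.castLE hmp)
  set e := Tmat s ((Fin.last m).castLE hmp)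
  have he : e ⬝ᵥ e = 1 := Tmat_dotProduct_self s _
  simp only [add_dotProduct, dotProduct_add, dotProduct_comm e c, he, mul_one, mul_zero,
    zero_add, sum_const, card_univ, Fintype.card_fin, nsmul_eq_mul]
  push_cast
  field_simp
  ring

end Traces

/-- The trace identities
`tr(B_t T_s' B^k_p T_s B_t) = k − ξ_k/k`,
`tr(B_t T_s' B^k_p F_s B_t) = (k ρ_k + f_{k,t_k} − ξ_k)/k`, and
`tr(B_t F_s' B^k_p F_s B_t) = (kt−1)(k−1)/(kt) − (ξ_k − 2 f_{k,t_k} + 1)/k`. -/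
theorem trace_identities
    (p t : ℕ)
    (s : Fin p → Fin t) (k : ℕ) (hk1 : 1 ≤ k) (hkp : k ≤ p) :
    (Bsq t * (Tmat s)ᵀ * Bblock k p p * Tmat s * Bsq t).trace =
      (k : ℝ) - (xiSum s k : ℝ) / k ∧
    (Bsq t * (Tmat s)ᵀ * Bblock k p p * Fmat s * Bsq t).trace =
      ((k : ℝ) * (rhoCount s k : ℝ) +
        (fcount s k (s ⟨k - 1, by omega⟩) : ℝ) - (xiSum s k : ℝ)) / k ∧
    (Bsq t * (Fmat s)ᵀ * Bblock k p p * Fmat s * Bsq t).trace =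
      ((k : ℝ) * t - 1) * ((k : ℝ) - 1) / ((k : ℝ) * t) -
        ((xiSum s k : ℝ) - 2 * (fcount s k (s ⟨k - 1, by omega⟩) : ℝ) + 1) / k := by
  obtain ⟨m, rfl⟩ := Nat.exists_eq_add_of_le' hk1
  exact ⟨trace_Tmat_Tmat s m.succ_ne_zero hkp, trace_Tmat_Fmat s hkp, trace_Fmat_Fmat s hkp⟩

end
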